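/- Let q, f ∈ ℝ³ with ‖q‖ = 1 and f · q = 0, and let F be the Cayley transform of f. Then (F − I) q = −(2/(1 + f·f)) (q fᵀ + q̂) f, where q̂ v = q × v and q fᵀ denotes the outer product matrix. -/

import Mathlib

/-!
With `A = hat f`, so that `A v = f × v`, the vector triple product gives
`(1 - A)(1 + A + f fᵀ) = (1 + f·f) I`, hence `(1 - A)⁻¹ = (1 + A + f fᵀ) / (1 + f·f)`.
Expanding, `(F - I) v = 2/(1 + f·f) (f × v + f × (f × v))` for every `v`; for `v = q ⊥ f`
the triple product is `-(f·f) q`, which is the claimed right-hand side read through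
`q fᵀ f = (f·f) q` and `q × f = -(f × q)`.
-/

open Matrix

/-- The hat map: `hat q` is the skew matrix with `(hat q).mulVec v = q ×₃ v`. -/
def hat (q : Fin 3 → ℝ) : Matrix (Fin 3) (Fin 3) ℝ :=
  !![0, -q 2, q 1; q 2, 0, -q 0; -q 1, q 0, 0]

/-- The Cayley transform of `f ∈ ℝ³`. -/
noncomputable def cayley (f : Fin 3 → ℝ) : Matrix (Fin 3) (Fin 3) ℝ :=
  (1 + hat f) * (1 - hat f)⁻¹

lemma hat_mulVec (q v : Fin 3 → ℝ) : hat q *ᵥ v = q ⨯₃ v := by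
  ext i
  fin_cases i <;> simp [hat, cross_apply, mulVec, vecHead, vecTail] <;> ring

lemma one_add_dotProduct_self_pos (f : Fin 3 → ℝ) : 0 < 1 + f ⬝ᵥ f := by
  have h := dotProduct_self_star_nonneg f
  rw [star_trivial] at h
  linarith

lemma one_sub_hat_mul_one_add_hat_add_vecMulVec (f : Fin 3 → ℝ) :
    (1 - hat f) * (1 + hat f + vecMulVec f f) = (1 + f ⬝ᵥ f) • 1 := by
  refine ext_iff_mulVec.2 fun v => ?_
  simp only [← mulVec_mulVec, sub_mulVec, add_mulVec, one_mulVec, hat_mulVec, vecMulVec_mulVec,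
    op_smul_eq_smul, smul_mulVec, map_add, map_smul, cross_self, cross_cross_eq_smul_sub_smul']
  module

lemma inv_one_sub_hat (f : Fin 3 → ℝ) :
    (1 - hat f)⁻¹ = (1 + f ⬝ᵥ f)⁻¹ • (1 + hat f + vecMulVec f f) := by
  apply inv_eq_right_inv
  rw [Matrix.mul_smul, one_sub_hat_mul_one_add_hat_add_vecMulVec, smul_smul,
    inv_mul_cancel₀ (one_add_dotProduct_self_pos f).ne', one_smul]

lemma cayley_sub_one_mulVec (f v : Fin 3 → ℝ) :
    (cayley f - 1) *ᵥ v = (2 / (1 + f ⬝ᵥ f)) • (f ⨯₃ v + f ⨯₃ (f ⨯₃ v)) := by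
  have hc : (1 + f ⬝ᵥ f)⁻¹ * (1 + f ⬝ᵥ f) = 1 :=
    inv_mul_cancel₀ (one_add_dotProduct_self_pos f).ne'
  rw [cayley, inv_one_sub_hat, div_eq_mul_inv]
  simp only [sub_mulVec, Matrix.mul_smul, ← mulVec_mulVec, smul_mulVec, add_mulVec, one_mulVec,
    hat_mulVec, vecMulVec_mulVec, op_smul_eq_smul, map_add, map_smul, cross_self,
    cross_cross_eq_smul_sub_smul']
  linear_combination (norm := module) hc • v

theorem stmt16_general (q f : Fin 3 → ℝ) (hfq : f ⬝ᵥ q = 0) :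
    (cayley f - 1).mulVec q =
      -((2 / (1 + f ⬝ᵥ f)) • (vecMulVec q f + hat q).mulVec f) := by
  rw [cayley_sub_one_mulVec, add_mulVec, vecMulVec_mulVec, hat_mulVec, op_smul_eq_smul,
    cross_cross_eq_smul_sub_smul', hfq, ← cross_anticomm]
  module

theorem stmt16 (q f : Fin 3 → ℝ) (hq : q ⬝ᵥ q = 1) (hfq : f ⬝ᵥ q = 0) :
    (cayley f - 1).mulVec q =
      -((2 / (1 + f ⬝ᵥ f)) • (vecMulVec q f + hat q).mulVec f) :=
  stmt16_general q f hfq
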